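/- Let 0 < σ₁ < σ₂, N ≥ 2, and let f_j (j=1,2) be C² solutions of f_j'' + ((N-1)/r) f_j' - (1/σ_j) f_j = 0 on (0,∞) with f₁'(ρ) = f₂'(ρ) = 0 and f₁(ρ) = f₂(ρ) < 0. If there exists s ∈ (0,ρ) such that f₁(s) = f₂(s) and f₁(r) < f₂(r) for every r ∈ (s,ρ), then f₁'(s) < 0 and f₂'(s) < 0. -/

import Mathlib

/-!
Write `k = N - 1`. Multiplying the equation by `σ_j r^k` turns it into `(σ_j r^k f_j')' = r^k f_j`,
so the difference of fluxes `G = σ₂ r^k f₂' - σ₁ r^k f₁'` has derivative `r^k (f₂ - f₁) > 0` on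
`(s, ρ)`. Since `G(ρ) = 0`, this gives `σ₂ f₂'(s) < σ₁ f₁'(s)`. On the other hand `f₁ < f₂` to
the right of the contact point `s` forces `f₁'(s) ≤ f₂'(s)`. Together with `σ₁ < σ₂` these give
`f₂'(s) < 0`, hence also `f₁'(s) < 0`.
-/

open Set Filter Topology

noncomputable def radialFlux (σ k : ℝ) (f : ℝ → ℝ) (r : ℝ) : ℝ :=
  σ * (r ^ k * deriv f r)

theorem hasDerivAt_radialFlux {σ k : ℝ} {f : ℝ → ℝ} (hσ : σ ≠ 0)
    (hreg : ContDiffOn ℝ 2 f (Ioi 0))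
    (hode : ∀ r ∈ Ioi (0 : ℝ), deriv (deriv f) r + k / r * deriv f r - (1 / σ) * f r = 0)
    {x : ℝ} (hx : 0 < x) :
    HasDerivAt (radialFlux σ k f) (x ^ k * f x) x := by
  have hreg' : ContDiffOn ℝ 1 (deriv f) (Ioi 0) :=
    hreg.deriv_of_isOpen isOpen_Ioi (by norm_num)
  have hf' : HasDerivAt (deriv f) (deriv (deriv f) x) x :=
    ((hreg'.differentiableOn one_ne_zero).differentiableAt (Ioi_mem_nhds hx)).hasDerivAt
  have hpow : HasDerivAt (fun r : ℝ => r ^ k) (k * x ^ (k - 1)) x :=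
    Real.hasDerivAt_rpow_const (Or.inl hx.ne')
  refine ((hpow.mul hf').const_mul σ).congr_deriv ?_
  have hf'' : deriv (deriv f) x = 1 / σ * f x - k / x * deriv f x := by
    linarith [hode x hx]
  rw [hf'', Real.rpow_sub_one hx.ne']
  field_simp
  ring

theorem deriv_le_deriv_of_eq_of_lt_right {f g : ℝ → ℝ} {s ρ : ℝ} (hsρ : s < ρ)
    (hf : DifferentiableAt ℝ f s) (hg : DifferentiableAt ℝ g s)
    (heq : f s = g s) (hlt : ∀ r ∈ Ioo s ρ, f r < g r) :
    deriv f s ≤ deriv g s := by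
  have hslope := (hg.hasDerivAt.sub hf.hasDerivAt).tendsto_slope_zero_right
  refine sub_nonneg.1 (ge_of_tendsto hslope ?_)
  filter_upwards [Ioo_mem_nhdsGT (sub_pos.2 hsρ)] with t ht
  have hgap : f (s + t) < g (s + t) := hlt _ ⟨by linarith [ht.1], by linarith [ht.2]⟩
  simp only [Pi.sub_apply, heq, sub_self, sub_zero, smul_eq_mul]
  exact mul_nonneg (inv_nonneg.2 ht.1.le) (sub_nonneg.2 hgap.le)

theorem radialFlux_sub_lt {σ₁ σ₂ k s ρ : ℝ} {f₁ f₂ : ℝ → ℝ} (hs : 0 < s) (hsρ : s < ρ)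
    (hF₁ : ∀ x, 0 < x → HasDerivAt (radialFlux σ₁ k f₁) (x ^ k * f₁ x) x)
    (hF₂ : ∀ x, 0 < x → HasDerivAt (radialFlux σ₂ k f₂) (x ^ k * f₂ x) x)
    (hlt : ∀ r ∈ Ioo s ρ, f₁ r < f₂ r) :
    radialFlux σ₂ k f₂ s - radialFlux σ₁ k f₁ s < radialFlux σ₂ k f₂ ρ - radialFlux σ₁ k f₁ ρ := by
  have hF : ∀ x ∈ Icc s ρ, HasDerivAt (radialFlux σ₂ k f₂ - radialFlux σ₁ k f₁)
      (x ^ k * f₂ x - x ^ k * f₁ x) x := fun x hx =>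
    (hF₂ x (hs.trans_le hx.1)).sub (hF₁ x (hs.trans_le hx.1))
  have hmono : StrictMonoOn (radialFlux σ₂ k f₂ - radialFlux σ₁ k f₁) (Icc s ρ) := by
    refine strictMonoOn_of_hasDerivWithinAt_pos (f' := fun x => x ^ k * f₂ x - x ^ k * f₁ x)
      (convex_Icc s ρ)
      (fun x hx => (hF x hx).continuousAt.continuousWithinAt) (fun x hx => ?_) (fun x hx => ?_)
    · exact (hF x (interior_subset hx)).hasDerivWithinAt
    · rw [interior_Icc] at hx
      rw [← mul_sub]
      exact mul_pos (Real.rpow_pos_of_pos (hs.trans hx.1) k) (sub_pos.2 (hlt x hx))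
  exact hmono (left_mem_Icc.2 hsρ.le) (right_mem_Icc.2 hsρ.le) hsρ

theorem stmt_8 (σ₁ σ₂ : ℝ) (hσ₁ : 0 < σ₁) (hσ₁₂ : σ₁ < σ₂) (N : ℕ) (hN : 2 ≤ N)
    (f₁ f₂ : ℝ → ℝ)
    (hreg₁ : ContDiffOn ℝ 2 f₁ (Set.Ioi 0)) (hreg₂ : ContDiffOn ℝ 2 f₂ (Set.Ioi 0))
    (hode₁ : ∀ r ∈ Set.Ioi (0 : ℝ),
      deriv (deriv f₁) r + ((N : ℝ) - 1) / r * deriv f₁ r - (1 / σ₁) * f₁ r = 0)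
    (hode₂ : ∀ r ∈ Set.Ioi (0 : ℝ),
      deriv (deriv f₂) r + ((N : ℝ) - 1) / r * deriv f₂ r - (1 / σ₂) * f₂ r = 0)
    (ρ : ℝ) (hρ : 0 < ρ)
    (ρ : ℝ) (hρ : 0 < ρ)
    (hder : deriv f₁ ρ = 0) (hder' : deriv f₂ ρ = 0)
    (hval : f₁ ρ = f₂ ρ) (hvneg : f₁ ρ < 0)
    (s : ℝ) (hs : s ∈ Set.Ioo 0 ρ)
    (hvs : f₁ s = f₂ s) (hlt : ∀ r ∈ Set.Ioo s ρ, f₁ r < f₂ r) :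
    deriv f₁ s < 0 ∧ deriv f₂ s < 0 := by
  obtain ⟨hs0, hsρ⟩ := hs
  have hflux := radialFlux_sub_lt hs0 hsρ
    (fun x hx => hasDerivAt_radialFlux hσ₁.ne' hreg₁ hode₁ hx)
    (fun x hx => hasDerivAt_radialFlux (hσ₁.trans hσ₁₂).ne' hreg₂ hode₂ hx) hlt
  simp only [radialFlux, hder, hder', mul_zero, sub_zero] at hflux
  have hdiff : ∀ {f : ℝ → ℝ}, ContDiffOn ℝ 2 f (Ioi 0) → DifferentiableAt ℝ f s := fun h =>
    (h.differentiableOn (by norm_num)).differentiableAt (Ioi_mem_nhds hs0)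
  have hderiv : deriv f₁ s ≤ deriv f₂ s :=
    deriv_le_deriv_of_eq_of_lt_right hsρ (hdiff hreg₁) (hdiff hreg₂) hvs hlt
  have hpow : 0 < s ^ ((N : ℝ) - 1) := Real.rpow_pos_of_pos hs0 _
  have hσ : σ₂ * deriv f₂ s < σ₁ * deriv f₁ s :=
    sub_neg.1 (neg_of_mul_neg_right (by linarith) hpow.le)
  have h₂ : deriv f₂ s < 0 := by nlinarith [mul_le_mul_of_nonneg_left hderiv hσ₁.le]
  exact ⟨hderiv.trans_lt h₂, h₂⟩
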